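/- Let g ∈ C^{r+1}[c,d], and let the activation σ and quasi-uniform irregular grid (with 0 < d_1 ≤ z_{k+1} - z_k ≤ d_2 < 2d_1) be as above. Then for all y ∈ [c,d], |T̃_{n,r}(g,y) - g(y)| ≤ d_2^{r+1}/(r+1)! · ‖g^{(r+1)}‖_∞. In particular ‖T̃_{n,r}(g) - g‖_∞ → 0 as the mesh norm d_2 → 0. -/

import Mathlib

open Set

private lemma taylor_aux (c d : ℝ) (r : ℕ) (g : ℝ → ℝ) (Dg : ℕ → ℝ → ℝ) (hDg0 : Dg 0 = g)
    (hderiv : ∀ j < r + 1, ∀ x ∈ Set.Icc c d,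
      HasDerivWithinAt (Dg j) (Dg (j + 1) x) (Set.Icc c d) x)
    (M : ℝ) (hM : ∀ x ∈ Set.Icc c d, |Dg (r + 1) x| ≤ M)
    (a y : ℝ) (ha : a ∈ Set.Icc c d) (hy : y ∈ Set.Icc c d) (hay : a ≤ y) :
    |∑ j ∈ Finset.range (r + 1), Dg j a / (Nat.factorial j) * (y - a) ^ j - g y|
      ≤ M * (y - a) ^ (r + 1) / Nat.factorial (r + 1) := by
  rcases eq_or_lt_of_le hay with rfl | hlt
  · have h : ∑ j ∈ Finset.range (r + 1), Dg j a / (Nat.factorial j) * (0:ℝ) ^ j = g a := by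
      rw [Finset.sum_eq_single 0]
      · simp [hDg0]
      · intro j _ hj; simp [zero_pow hj]
      · simp
    simp [h]
  · have hsub : Set.Icc a y ⊆ Set.Icc c d := Set.Icc_subset_Icc ha.1 hy.2
    have hud : UniqueDiffOn ℝ (Set.Icc a y) := uniqueDiffOn_Icc hlt
    have bridge : ∀ j, j ≤ r + 1 → ∀ x ∈ Set.Icc a y,
        iteratedDerivWithin j g (Set.Icc a y) x = Dg j x := by
      intro j
      induction j with
      | zero => intro _ x hx; simp [hDg0]
      | succ j ih =>
        intro hj x hx
        rw [iteratedDerivWithin_succ,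
          derivWithin_congr (fun t ht => ih (by omega) t ht) (ih (by omega) x hx)]
        exact ((hderiv j (by omega) x (hsub hx)).mono hsub).derivWithin (hud x hx)
    have hdiff : ∀ m : ℕ, m ≤ r →
        DifferentiableOn ℝ (iteratedDerivWithin m g (Set.Icc a y)) (Set.Icc a y) := by
      intro m hm
      have hd : DifferentiableOn ℝ (Dg m) (Set.Icc a y) := fun x hx =>
        ((hderiv m (by omega) x (hsub hx)).mono hsub).differentiableWithinAt
      exact hd.congr (fun x hx => bridge m (by omega) x hx)
    have hcd : ContDiffOn ℝ r g (Set.Icc a y) := by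
      exact_mod_cast contDiffOn_of_differentiableOn_deriv
        (n := (r : ℕ∞)) (fun m hm => hdiff m (by exact_mod_cast hm))
    obtain ⟨x', hx', hrem⟩ := taylor_mean_remainder_lagrange (n := r) hlt.ne
      (by rw [Set.uIcc_of_le hay]; exact hcd)
      (by rw [Set.uIcc_of_le hay, Set.uIoo_of_le hay]
          exact (hdiff r le_rfl).mono Set.Ioo_subset_Icc_self)
    rw [Set.uIcc_of_le hay] at hrem
    rw [Set.uIoo_of_le hay] at hx'
    have hP : taylorWithinEval g r (Set.Icc a y) a y
        = ∑ j ∈ Finset.range (r + 1), Dg j a / (Nat.factorial j) * (y - a) ^ j := by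
      rw [taylor_within_apply]
      refine Finset.sum_congr rfl fun j hj => ?_
      rw [bridge j (le_of_lt (Finset.mem_range.1 hj)) a (Set.left_mem_Icc.mpr hay)]
      rw [smul_eq_mul, div_eq_mul_inv]; ring
    have hx'cd : x' ∈ Set.Icc c d := hsub (Set.Ioo_subset_Icc_self hx')
    have h2 : iteratedDerivWithin (r + 1) g (Set.Icc a y) x' = Dg (r + 1) x' :=
      bridge (r + 1) le_rfl x' (Set.Ioo_subset_Icc_self hx')
    rw [h2] at hrem
    rw [abs_sub_comm, ← hP, hrem]
    rw [abs_div, abs_mul, abs_of_nonneg (pow_nonneg (by linarith : (0:ℝ) ≤ y - a) _),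
      abs_of_nonneg (by positivity : (0:ℝ) ≤ ((r+1).factorial : ℝ))]
    gcongr <;>
      first
        | exact pow_nonneg (by linarith) _
        | exact hM x' hx'cd

/-- Jackson-type estimate for the Taylor-accelerated neural network
interpolation operator: for `g ∈ C^{r+1}[c,d]` (encoded by the derivative
family `Dg`, `Dg 0 = g`), the uniform error is bounded by
`d2^{r+1}/(r+1)! · ‖g^{(r+1)}‖_∞`. -/
theorem taylor_operator_jackson_estimate
    (m d1 d2 c d : ℝ) (r : ℕ) (hm : 0 < m) (hd1 : 0 < d1) (hd12 : d1 ≤ d2)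
    (hd2 : d2 < 2 * d1) (hcd : c ≤ d)
    (η : ℝ → ℝ) (hmono : Monotone η)
    (h0 : ∀ y ≤ -m, η y = 0) (h1 : ∀ y, m ≤ y → η y = 1)
    (hmid : ∀ y, -m < y → y < m → 0 < η y ∧ η y < 1)
    (σ : ℝ → ℝ) (hσ : ∀ y, σ y = η (y + m) - η (y - m))
    (n : ℕ) (z : ℕ → ℝ) (hzc : z 0 = c) (hzd : z n = d)
    (hgap : ∀ k < n, d1 ≤ z (k + 1) - z k ∧ z (k + 1) - z k ≤ d2)
    (g : ℝ → ℝ) (Dg : ℕ → ℝ → ℝ) (hDg0 : Dg 0 = g)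
    (hcont : ∀ j ≤ r + 1, ContinuousOn (Dg j) (Set.Icc c d))
    (hderiv : ∀ j < r + 1, ∀ x ∈ Set.Icc c d,
      HasDerivWithinAt (Dg j) (Dg (j + 1) x) (Set.Icc c d) x) :
    ∀ y ∈ Set.Icc c d,
      |(∑ k ∈ Finset.range (n + 1), σ (2 * m / d1 * (y - z k)) *
          ∑ j ∈ Finset.range (r + 1),
            Dg j (z k) / (Nat.factorial j) * (y - z k) ^ j) /
        (∑ k ∈ Finset.range (n + 1), σ (2 * m / d1 * (y - z k)))
        - g y|
      ≤ d2 ^ (r + 1) / (Nat.factorial (r + 1)) *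
          ⨆ x : Set.Icc c d, |Dg (r + 1) x| := by
  classical
  -- basic facts about σ
  have hσ_nonneg : ∀ t, 0 ≤ σ t := by
    intro t; rw [hσ]
    have := hmono (show t - m ≤ t + m by linarith)
    linarith
  have hσ_zero : ∀ t, 2 * m ≤ |t| → σ t = 0 := by
    intro t ht; rw [hσ]
    rcases le_abs.mp ht with h | h
    · rw [h1 _ (by linarith), h1 _ (by linarith)]; ring
    · rw [h0 _ (by linarith), h0 _ (by linarith)]; ring
  have hσ_pos : ∀ t, |t| < 2 * m → 0 < σ t := by
    intro t ht
    obtain ⟨ht1, ht2⟩ := abs_lt.mp ht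
    rw [hσ]
    rcases le_or_gt 0 t with h | h
    · rw [h1 _ (by linarith)]
      rcases eq_or_lt_of_le (show -m ≤ t - m by linarith) with he | hlt
      · rw [h0 (t - m) (le_of_eq he.symm)]; linarith
      · have := (hmid (t - m) hlt (by linarith)).2; linarith
    · rw [h0 (t - m) (by linarith)]
      have := (hmid (t + m) (by linarith) (by linarith)).1; linarith
  -- monotonicity of the grid
  have hzmono : ∀ i j, i ≤ j → j ≤ n → z i ≤ z j := by
    intro i j hij hjn
    induction j with
    | zero =>
      have h' : i = 0 := by omega
      rw [h']
    | succ j ih =>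
      rcases Nat.lt_or_ge i (j + 1) with h | h
      · have h1' : z i ≤ z j := ih (by omega) (by omega)
        have := (hgap j (by omega)).1
        linarith
      · have h' : i = j + 1 := by omega
        rw [h']
  have hzmem : ∀ k, k ≤ n → z k ∈ Set.Icc c d := by
    intro k hk
    exact ⟨hzc ▸ hzmono 0 k (Nat.zero_le _) hk, hzd ▸ hzmono k n hk le_rfl⟩
  -- the sup bound
  set M := ⨆ x : Set.Icc c d, |Dg (r + 1) ↑x| with hMdef
  have hbdd : BddAbove (Set.range fun x : Set.Icc c d => |Dg (r + 1) ↑x|) := by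
    have hc : ContinuousOn (fun t => |Dg (r + 1) t|) (Set.Icc c d) := (hcont (r + 1) le_rfl).abs
    have himg := (isCompact_Icc (a := c) (b := d)).bddAbove_image hc
    have hrg : (Set.range fun x : Set.Icc c d => |Dg (r + 1) ↑x|)
        = (fun t => |Dg (r + 1) t|) '' Set.Icc c d := by
      rw [show (fun x : Set.Icc c d => |Dg (r + 1) ↑x|)
          = (fun t => |Dg (r + 1) t|) ∘ (Subtype.val) from rfl,
        Set.range_comp, Subtype.range_coe]
    rwa [hrg]
  have hM : ∀ x ∈ Set.Icc c d, |Dg (r + 1) x| ≤ M := fun x hx => le_ciSup hbdd ⟨x, hx⟩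
  have hM0 : 0 ≤ M := Real.iSup_nonneg (fun x => abs_nonneg _)
  intro y hy
  -- key per-node Taylor bound
  have key : ∀ k, k ≤ n → |y - z k| ≤ d2 →
      |(∑ j ∈ Finset.range (r + 1), Dg j (z k) / (Nat.factorial j) * (y - z k) ^ j) - g y|
        ≤ d2 ^ (r + 1) / (Nat.factorial (r + 1)) * M := by
    intro k hkn hkd2
    have hzk : z k ∈ Set.Icc c d := hzmem k hkn
    rcases le_or_gt (z k) y with hle | hlt
    · have hb := taylor_aux c d r g Dg hDg0 hderiv M hM (z k) y hzk hy hle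
      calc |(∑ j ∈ Finset.range (r + 1), Dg j (z k) / (Nat.factorial j) * (y - z k) ^ j) - g y|
          ≤ M * (y - z k) ^ (r + 1) / Nat.factorial (r + 1) := hb
        _ ≤ M * d2 ^ (r + 1) / Nat.factorial (r + 1) := by
            gcongr
            · rw [abs_of_nonneg (by linarith)] at hkd2; exact hkd2
        _ = d2 ^ (r + 1) / (Nat.factorial (r + 1)) * M := by ring
    · -- reflect the situation
      set g' : ℝ → ℝ := fun x => g (c + d - x) with hg'
      set Dg' : ℕ → ℝ → ℝ := fun j x => (-1 : ℝ) ^ j * Dg j (c + d - x) with hDg'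
      have hmap : ∀ x ∈ Set.Icc c d, c + d - x ∈ Set.Icc c d := by
        intro x hx; exact ⟨by linarith [hx.2], by linarith [hx.1]⟩
      have hDg0' : Dg' 0 = g' := by funext x; simp [hDg', hg', hDg0]
      have hderiv' : ∀ j < r + 1, ∀ x ∈ Set.Icc c d,
          HasDerivWithinAt (Dg' j) (Dg' (j + 1) x) (Set.Icc c d) x := by
        intro j hj x hx
        have hinner : HasDerivWithinAt (fun x : ℝ => c + d - x) (-1) (Set.Icc c d) x := by
          simpa using (hasDerivWithinAt_id x (Set.Icc c d)).const_sub (c + d)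
        have hcomp := ((hderiv j hj (c + d - x) (hmap x hx)).comp x hinner
          (fun t ht => hmap t ht))
        have := hcomp.const_mul ((-1 : ℝ) ^ j)
        exact this.congr_deriv (by simp [hDg']; ring)
      have hM' : ∀ x ∈ Set.Icc c d, |Dg' (r + 1) x| ≤ M := by
        intro x hx
        have : |Dg' (r + 1) x| = |Dg (r + 1) (c + d - x)| := by
          rw [hDg']; rw [abs_mul, abs_pow, abs_neg, abs_one, one_pow, one_mul]
        rw [this]; exact hM _ (hmap x hx)
      have hb := taylor_aux c d r g' Dg' hDg0' hderiv' M hM' (c + d - z k) (c + d - y)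
        (hmap _ hzk) (hmap _ hy) (by linarith)
      have hsum : ∑ j ∈ Finset.range (r + 1),
          Dg' j (c + d - z k) / (Nat.factorial j) * ((c + d - y) - (c + d - z k)) ^ j
          = ∑ j ∈ Finset.range (r + 1), Dg j (z k) / (Nat.factorial j) * (y - z k) ^ j := by
        refine Finset.sum_congr rfl fun j _ => ?_
        simp only [hDg']
        rw [show c + d - (c + d - z k) = z k by ring,
          show c + d - y - (c + d - z k) = -(y - z k) by ring]
        have hp : (-1 : ℝ) ^ j * (-(y - z k)) ^ j = (y - z k) ^ j := by
          rw [← mul_pow]; norm_num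
        linear_combination (Dg j (z k) / (Nat.factorial j : ℝ)) * hp
      have hgy : g' (c + d - y) = g y := by
        simp only [hg']; congr 1; ring
      rw [hsum, hgy] at hb
      calc |(∑ j ∈ Finset.range (r + 1), Dg j (z k) / (Nat.factorial j) * (y - z k) ^ j) - g y|
          ≤ M * ((c + d - y) - (c + d - z k)) ^ (r + 1) / Nat.factorial (r + 1) := hb
        _ = M * (z k - y) ^ (r + 1) / Nat.factorial (r + 1) := by ring_nf
        _ ≤ M * d2 ^ (r + 1) / Nat.factorial (r + 1) := by
            gcongr
            · rw [abs_of_nonpos (by linarith)] at hkd2; linarith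
        _ = d2 ^ (r + 1) / (Nat.factorial (r + 1)) * M := by ring
  -- weights
  set w : ℕ → ℝ := fun k => σ (2 * m / d1 * (y - z k)) with hw
  have h2md1 : 0 < 2 * m / d1 := by positivity
  have hwd2 : ∀ k, w k ≠ 0 → |y - z k| ≤ d2 := by
    intro k hk
    by_contra hgt
    push_neg at hgt
    have hd1le : d1 ≤ |y - z k| := by linarith
    apply hk
    rw [hw]
    apply hσ_zero
    rw [abs_mul, abs_of_pos h2md1]
    calc 2 * m = 2 * m / d1 * d1 := by field_simp
      _ ≤ 2 * m / d1 * |y - z k| := by gcongr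
  -- existence of a close node
  have hyn : y ≤ z n := hzd ▸ hy.2
  have hex : ∃ k, y ≤ z k := ⟨n, hyn⟩
  have hclose : ∃ k, k ≤ n ∧ |y - z k| < d1 := by
    have hk0n : Nat.find hex ≤ n := Nat.find_le hyn
    rcases hk : Nat.find hex with _ | j
    · have hspec : y ≤ z 0 := hk ▸ Nat.find_spec hex
      have : y = z 0 := le_antisymm hspec (hzc ▸ hy.1)
      exact ⟨0, Nat.zero_le _, by simp [this, hd1]⟩
    · have hspec : y ≤ z (j + 1) := hk ▸ Nat.find_spec hex
      have hjlt : ¬ y ≤ z j := Nat.find_min hex (by omega)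
      push_neg at hjlt
      have hjn : j < n := by omega
      obtain ⟨hg1, hg2⟩ := hgap j hjn
      rcases lt_or_ge (y - z j) d1 with hcase | hcase
      · exact ⟨j, by omega, by rw [abs_of_nonneg (by linarith)]; exact hcase⟩
      · refine ⟨j + 1, by omega, ?_⟩
        rw [abs_of_nonpos (by linarith)]
        linarith
  obtain ⟨k₀, hk₀n, hk₀⟩ := hclose
  have hwpos : 0 < w k₀ := by
    rw [hw]
    apply hσ_pos
    rw [abs_mul, abs_of_pos h2md1]
    calc 2 * m / d1 * |y - z k₀| < 2 * m / d1 * d1 := by gcongr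
      _ = 2 * m := by field_simp
  have hS : 0 < ∑ k ∈ Finset.range (n + 1), w k :=
    Finset.sum_pos' (fun k _ => hσ_nonneg _)
      ⟨k₀, Finset.mem_range.2 (Nat.lt_succ_of_le hk₀n), hwpos⟩
  set P : ℕ → ℝ := fun k => ∑ j ∈ Finset.range (r + 1),
    Dg j (z k) / (Nat.factorial j) * (y - z k) ^ j with hP
  set B := d2 ^ (r + 1) / (Nat.factorial (r + 1)) * M with hB
  have hB0 : 0 ≤ B := by
    exact mul_nonneg (div_nonneg (pow_nonneg (by linarith) _) (by positivity)) hM0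
  have main : |∑ k ∈ Finset.range (n + 1), w k * P k
      - g y * ∑ k ∈ Finset.range (n + 1), w k| ≤ B * ∑ k ∈ Finset.range (n + 1), w k := by
    rw [Finset.mul_sum, ← Finset.sum_sub_distrib]
    calc |∑ k ∈ Finset.range (n + 1), (w k * P k - g y * w k)|
        ≤ ∑ k ∈ Finset.range (n + 1), |w k * P k - g y * w k| :=
          Finset.abs_sum_le_sum_abs _ _
      _ ≤ ∑ k ∈ Finset.range (n + 1), w k * B := by
          refine Finset.sum_le_sum fun k hk => ?_
          have hkn : k ≤ n := by
            have := Finset.mem_range.1 hk; omega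
          by_cases hwk : w k = 0
          · simp [hwk]
          · have habs : |w k * P k - g y * w k| = w k * |P k - g y| := by
              rw [show w k * P k - g y * w k = w k * (P k - g y) by ring, abs_mul,
                abs_of_nonneg (hσ_nonneg _)]
            rw [habs]
            exact mul_le_mul_of_nonneg_left (key k hkn (hwd2 k hwk)) (hσ_nonneg _)
      _ = B * ∑ k ∈ Finset.range (n + 1), w k := by
          rw [← Finset.sum_mul]; ring
  have hdivEq : (∑ k ∈ Finset.range (n + 1), w k * P k) /
      (∑ k ∈ Finset.range (n + 1), w k) - g y
      = (∑ k ∈ Finset.range (n + 1), w k * P k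
        - g y * ∑ k ∈ Finset.range (n + 1), w k) / (∑ k ∈ Finset.range (n + 1), w k) := by
    field_simp
  calc |(∑ k ∈ Finset.range (n + 1), w k * P k) /
      (∑ k ∈ Finset.range (n + 1), w k) - g y|
      = |∑ k ∈ Finset.range (n + 1), w k * P k
        - g y * ∑ k ∈ Finset.range (n + 1), w k| / (∑ k ∈ Finset.range (n + 1), w k) := by
        rw [hdivEq, abs_div, abs_of_pos hS]
    _ ≤ B := by
        rw [div_le_iff₀ hS]; exact main
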